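/- Let $X$ be a compact Kähler manifold with Kähler form $\omega_0$, let $\alpha$ be a nef and big class, and set $\alpha_i=\alpha+(1/i)\{\omega_0\}$. Let $E$ be a holomorphic vector bundle that is $\alpha^{n-1}$-slope stable, and assume the supremum of slopes $\mu_\alpha(\mathcal{F})$ over nonzero proper subsheaves is attained by some $\mathcal{F}_0$, and that for each $1\le j\le n-1$ the quantities $\int_X c_1(\mathcal{F})\wedge\alpha^{n-1-j}\wedge\omega_0^j / \mathrm{rk}\,\mathcal{F}$ are uniformly bounded over all subsheaves $\mathcal{F}\subset E$. Then there exists $i_0$ such that for all $i\ge i_0$, $E$ is $\alpha_i^{n-1}$-slope stable. -/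
import Mathlib

lemma sum_bound_aux {n : ℕ} (Cbin : Fin n → ℝ) (u : Fin n → ℝ) (B : ℝ)
    (hu : ∀ j, |u j| ≤ B) {i : ℕ} (hi : 1 ≤ i) :
    |∑ j : Fin n, Cbin j * (1 / (i : ℝ)) ^ (j.1 + 1) * u j|
      ≤ (∑ j : Fin n, |Cbin j| * B) / i := by
  have hi' : (1:ℝ) ≤ (i:ℝ) := by exact_mod_cast hi
  have hipos : (0:ℝ) < (i:ℝ) := by linarith
  have hinv : 0 ≤ 1 / (i:ℝ) := by positivity
  have hinv1 : 1 / (i:ℝ) ≤ 1 := by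
    rw [div_le_one hipos]; exact hi'
  calc |∑ j : Fin n, Cbin j * (1 / (i : ℝ)) ^ (j.1 + 1) * u j|
      ≤ ∑ j : Fin n, |Cbin j * (1 / (i : ℝ)) ^ (j.1 + 1) * u j| :=
        Finset.abs_sum_le_sum_abs _ _
    _ ≤ ∑ j : Fin n, |Cbin j| * B * (1 / i) := by
        apply Finset.sum_le_sum
        intro j _
        rw [abs_mul, abs_mul, abs_pow, abs_of_nonneg hinv]
        have hB : 0 ≤ B := le_trans (abs_nonneg _) (hu j)
        have hpow : (1 / (i:ℝ)) ^ (j.1 + 1) ≤ 1 / i := by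
          calc (1 / (i:ℝ)) ^ (j.1 + 1) ≤ (1 / (i:ℝ)) ^ 1 :=
                pow_le_pow_of_le_one hinv hinv1 (by omega)
            _ = 1 / i := pow_one _
        have h1 : |Cbin j| * (1 / (i:ℝ)) ^ (j.1 + 1) * |u j|
            ≤ |Cbin j| * (1 / i) * B := by
          apply mul_le_mul _ (hu j) (abs_nonneg _) (by positivity)
          exact mul_le_mul_of_nonneg_left hpow (abs_nonneg _)
        linarith [h1]
    _ = (∑ j : Fin n, |Cbin j| * B) / i := by
        rw [Finset.sum_div]
        apply Finset.sum_congr rfl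
        intro j _; ring

/- STATEMENT 2: Stability with respect to α persists for the perturbed classes α_i = α + (1/i)ω₀.
`S` indexes saturated proper nonzero subsheaves of E; `μ` is the α-slope, `μE = μ_α(E)`;
stability (hstable) and attainment of the maximal slope by F₀ (hmax) are assumed;
`t F j` (resp. `tE j`) are the uniformly bounded mixed terms
∫ c1(F)∧α^{n-1-j}∧ω₀^j / rk F for 1 ≤ j ≤ n-1, and the α_i-slope expands via the
binomial coefficients `Cbin j` (hμi, hμiE). Conclusion: E is α_i-stable for i large. -/
theorem stmt2 {S : Type*} (n : ℕ)
    (μ : S → ℝ) (μE : ℝ)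
    (hstable : ∀ F : S, μ F < μE)
    (F₀ : S) (hmax : ∀ F : S, μ F ≤ μ F₀)
    (t : S → Fin n → ℝ) (tE : Fin n → ℝ) (B : ℝ)
    (ht : ∀ (F : S) (j : Fin n), |t F j| ≤ B) (htE : ∀ j : Fin n, |tE j| ≤ B)
    (Cbin : Fin n → ℝ)
    (μi : ℕ → S → ℝ) (μiE : ℕ → ℝ)
    (hμi : ∀ (i : ℕ) (F : S),
      μi i F = μ F + ∑ j : Fin n, Cbin j * (1 / (i : ℝ)) ^ (j.1 + 1) * t F j)
    (hμiE : ∀ i : ℕ,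
      μiE i = μE + ∑ j : Fin n, Cbin j * (1 / (i : ℝ)) ^ (j.1 + 1) * tE j) :
    ∃ i₀ : ℕ, ∀ i ≥ i₀, ∀ F : S, μi i F < μiE i := by
  set C : ℝ := ∑ j : Fin n, |Cbin j| * B with hC
  set δ : ℝ := μE - μ F₀ with hδ
  have hδpos : 0 < δ := by have := hstable F₀; simp [hδ]; linarith
  obtain ⟨i₀, hi₀⟩ := exists_nat_gt (max 1 (2 * C / δ))
  refine ⟨i₀, fun i hi F => ?_⟩
  have hi1 : 1 ≤ i := by
    have h1 : (1:ℝ) < i₀ := lt_of_le_of_lt (le_max_left _ _) hi₀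
    have h2 : 1 < i₀ := by exact_mod_cast h1
    omega
  have hipos : (0:ℝ) < (i:ℝ) := by exact_mod_cast hi1
  have hCi : 2 * C / δ < (i:ℝ) := by
    have h1 : 2 * C / δ ≤ max 1 (2 * C / δ) := le_max_right _ _
    have h2 : (i₀:ℝ) ≤ (i:ℝ) := by exact_mod_cast hi
    linarith
  have hkey : 2 * (C / i) < δ := by
    have hCi' : 2 * C < (i:ℝ) * δ := (div_lt_iff₀ hδpos).mp hCi
    have heq : 2 * (C / (i:ℝ)) = 2 * C / i := by ring
    rw [heq, div_lt_iff₀ hipos]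
    nlinarith
  have h1 := sum_bound_aux Cbin (t F) B (ht F) hi1
  have h2 := sum_bound_aux Cbin tE B htE hi1
  rw [hμi, hμiE]
  have hF : μ F ≤ μE - δ := by have := hmax F; simp [hδ]; linarith
  rw [abs_le] at h1 h2
  linarith [h1.2, h2.1]
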